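/- (Proposition 7) Fix c ∈ ℝ, s ≥ 0 and ε ∈ (0,1), and let ε* ∈ ℝ be the unique real with Φ(ε*) = ε. Then the expected number of common features at sample i in the covariate-dependent MVP-IBP model, E(c_i^{(ε)}) = p · Φ((μ_p + c − ε*)/√(2 log p + s)), satisfies lim_{p→∞} p · Φ((μ_p + c − ε*)/√(2 log p + s)) = α · exp(−ε* + c + (s − 1)/2), where c = x_i^T γ and s = x_i^T Ψ x_i. -/

import Mathlib

/-! Put `u_p = μ_p / √(1 + 2 log p)` and `y_p = (μ_p + c - ε*) / √(2 log p + s)`, so that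
`Φ(u_p) = α / (α + p)`. Mills' ratio `Φ(x) ~ φ(x) / (-x)` as `x → -∞` gives
`log Φ(x) ~ -x² / 2`, hence `u_p² ~ 2 log p` and `μ_p ~ -2 log p`; this is exactly what makes
`u_p² - y_p² → s - 1 + 2 (c - ε*)`. A second use of Mills' ratio gives
`Φ(y_p) / Φ(u_p) ~ exp ((u_p² - y_p²) / 2)`, and `p Φ(u_p) → α`. -/

open MeasureTheory Real Filter

/-- The standard normal density `φ(x) = (2π)^{-1/2} exp(-x²/2)`. -/
noncomputable def stdNormalPDF (x : ℝ) : ℝ :=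
  (Real.sqrt (2 * Real.pi))⁻¹ * Real.exp (-x ^ 2 / 2)

/-- The standard normal CDF `Φ(x) = ∫_{-∞}^x φ(t) dt`. -/
noncomputable def stdNormalCDF (x : ℝ) : ℝ :=
  ∫ t in Set.Iio x, stdNormalPDF t

/-- `τ_p = √(2 log p)`. -/
noncomputable def tauP (p : ℕ) : ℝ := Real.sqrt (2 * Real.log p)

/-- The density of `N(μ_p, τ_p²)` at `x`, namely `τ_p⁻¹ φ((x - μ_p)/τ_p)`. -/
noncomputable def mvpDens (μ : ℕ → ℝ) (p : ℕ) (x : ℝ) : ℝ :=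
  (tauP p)⁻¹ * stdNormalPDF ((x - μ p) / tauP p)

lemma stdNormalPDF_pos (x : ℝ) : 0 < stdNormalPDF x := by
  unfold stdNormalPDF
  positivity

lemma continuous_stdNormalPDF : Continuous stdNormalPDF := by
  unfold stdNormalPDF
  fun_prop

lemma integrable_stdNormalPDF : Integrable stdNormalPDF := by
  have h : Integrable fun x : ℝ => Real.exp (-(1 / 2) * x ^ 2) :=
    integrable_exp_neg_mul_sq (by norm_num)
  refine (h.const_mul (Real.sqrt (2 * Real.pi))⁻¹).congr (.of_forall fun x => ?_)
  simp only [stdNormalPDF]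
  ring_nf

lemma hasDerivAt_stdNormalPDF (x : ℝ) : HasDerivAt stdNormalPDF (-x * stdNormalPDF x) x := by
  have h : HasDerivAt (fun y : ℝ => -y ^ 2 / 2) (-x) x :=
    ((hasDerivAt_pow 2 x).neg.div_const 2).congr_deriv (by ring)
  exact (h.exp.const_mul _).congr_deriv (by simp only [stdNormalPDF]; ring)

lemma tendsto_stdNormalPDF_atBot : Tendsto stdNormalPDF atBot (nhds 0) := by
  have h : Tendsto (fun x : ℝ => -x ^ 2 / 2) atBot atBot :=
    ((tendsto_neg_atTop_atBot.comp ((tendsto_pow_atTop two_ne_zero).comp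
      tendsto_neg_atBot_atTop)).atBot_div_const two_pos).congr fun x => by simp
  have h' := (Real.tendsto_exp_atBot.comp h).const_mul (Real.sqrt (2 * Real.pi))⁻¹
  rwa [mul_zero] at h'

lemma stdNormalCDF_sub_stdNormalCDF (a b : ℝ) :
    stdNormalCDF b - stdNormalCDF a = ∫ t in a..b, stdNormalPDF t := by
  simp only [stdNormalCDF, ← integral_Iic_eq_integral_Iio]
  exact intervalIntegral.integral_Iic_sub_Iic integrable_stdNormalPDF.integrableOn
    integrable_stdNormalPDF.integrableOn

lemma hasDerivAt_stdNormalCDF (x : ℝ) : HasDerivAt stdNormalCDF (stdNormalPDF x) x := by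
  have h : stdNormalCDF = fun y => stdNormalCDF 0 + ∫ t in (0 : ℝ)..y, stdNormalPDF t := by
    funext y
    rw [← stdNormalCDF_sub_stdNormalCDF]
    ring
  rw [h]
  exact ((continuous_stdNormalPDF.integral_hasStrictDerivAt 0 x).hasDerivAt).const_add _

lemma stdNormalCDF_pos (x : ℝ) : 0 < stdNormalCDF x := by
  rw [stdNormalCDF, setIntegral_pos_iff_support_of_nonneg_ae
    (.of_forall fun t => (stdNormalPDF_pos t).le) integrable_stdNormalPDF.integrableOn]
  simp [Function.support, (stdNormalPDF_pos _).ne']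

lemma monotone_stdNormalCDF : Monotone stdNormalCDF :=
  monotone_of_hasDerivAt_nonneg hasDerivAt_stdNormalCDF fun x => (stdNormalPDF_pos x).le

lemma tendsto_stdNormalCDF_atBot : Tendsto stdNormalCDF atBot (nhds 0) := by
  have h := intervalIntegral_tendsto_integral_Iic (μ := volume) (f := stdNormalPDF) 0
    integrable_stdNormalPDF.integrableOn tendsto_id
  rw [integral_Iic_eq_integral_Iio, ← stdNormalCDF] at h
  have h' := (tendsto_const_nhds (x := stdNormalCDF 0)).sub h
  rw [sub_self] at h'
  refine h'.congr fun x => ?_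
  rw [id, ← stdNormalCDF_sub_stdNormalCDF, sub_sub_cancel]

lemma neg_mul_stdNormalPDF_div_le_stdNormalCDF (x : ℝ) :
    -x * stdNormalPDF x / (1 + x ^ 2) ≤ stdNormalCDF x := by
  set g : ℝ → ℝ := fun x => stdNormalCDF x + x * stdNormalPDF x / (1 + x ^ 2)
  have hg' (x : ℝ) : HasDerivAt g (2 * stdNormalPDF x / (1 + x ^ 2) ^ 2) x := by
    have hden : HasDerivAt (fun x : ℝ => 1 + x ^ 2) (2 * x) x :=
      ((hasDerivAt_pow 2 x).const_add 1).congr_deriv (by ring)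
    refine ((hasDerivAt_stdNormalCDF x).add (((hasDerivAt_id' x).mul
      (hasDerivAt_stdNormalPDF x)).div hden (by positivity))).congr_deriv ?_
    simp only [Pi.mul_apply]
    field_simp
    ring
  have hg_mono : Monotone g := by
    refine monotone_of_hasDerivAt_nonneg hg' fun x => ?_
    have := stdNormalPDF_pos x
    show 0 ≤ 2 * stdNormalPDF x / (1 + x ^ 2) ^ 2
    positivity
  have hg_lim : Tendsto g atBot (nhds 0) := by
    rw [← add_zero 0]
    refine tendsto_stdNormalCDF_atBot.add
      (squeeze_zero_norm (fun x => ?_) tendsto_stdNormalPDF_atBot)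
    have hφ := stdNormalPDF_pos x
    have habs : |x| ≤ 1 + x ^ 2 := by nlinarith [abs_nonneg x, sq_abs x]
    rw [norm_div, norm_mul, Real.norm_of_nonneg hφ.le, Real.norm_eq_abs,
      Real.norm_of_nonneg (by positivity : (0 : ℝ) ≤ 1 + x ^ 2), div_le_iff₀ (by positivity)]
    nlinarith
  have := hg_mono.le_of_tendsto hg_lim x
  simp only [g, neg_mul, neg_div] at this ⊢
  linarith

lemma stdNormalCDF_le_stdNormalPDF_div_neg {x : ℝ} (hx : x < 0) :
    stdNormalCDF x ≤ stdNormalPDF x / -x := by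
  set h : ℝ → ℝ := fun x => stdNormalPDF x / -x - stdNormalCDF x
  have hh' {x : ℝ} (hx : x < 0) : HasDerivAt h (stdNormalPDF x / x ^ 2) x := by
    refine (((hasDerivAt_stdNormalPDF x).div (hasDerivAt_neg x) (by linarith)).sub
      (hasDerivAt_stdNormalCDF x)).congr_deriv ?_
    have hx0 : x ≠ 0 := hx.ne
    field_simp
    ring
  have hh_mono : MonotoneOn h (Set.Iio 0) :=
    monotoneOn_of_hasDerivWithinAt_nonneg (convex_Iio 0)
      (fun y hy => (hh' hy).continuousAt.continuousWithinAt)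
      (fun y hy => (hh' (by simpa using hy)).hasDerivWithinAt)
      (fun y _ => by have := stdNormalPDF_pos y; positivity)
  have hh_lim : Tendsto h atBot (nhds 0) := by
    rw [← sub_zero 0]
    refine (squeeze_zero_norm' ?_ tendsto_stdNormalPDF_atBot).sub tendsto_stdNormalCDF_atBot
    filter_upwards [eventually_le_atBot (-1)] with y hy
    have hφ := stdNormalPDF_pos y
    rw [norm_div, Real.norm_of_nonneg hφ.le, Real.norm_of_nonneg (by linarith),
      div_le_iff₀ (by linarith)]
    nlinarith
  have : 0 ≤ h x := le_of_tendsto hh_lim <| by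
    filter_upwards [eventually_lt_atBot x] with y hy
    exact hh_mono (hy.trans hx) hx hy.le
  simp only [h] at this
  linarith

lemma tendsto_stdNormalCDF_mul_neg_div_stdNormalPDF :
    Tendsto (fun x => stdNormalCDF x * -x / stdNormalPDF x) atBot (nhds 1) := by
  have hsq : Tendsto (fun x : ℝ => 1 + x ^ 2) atBot atTop :=
    tendsto_atTop_add_const_left _ 1 ((tendsto_pow_atTop two_ne_zero).comp tendsto_neg_atBot_atTop
      |>.congr fun x => by simp)
  have hlow : Tendsto (fun x : ℝ => x ^ 2 / (1 + x ^ 2)) atBot (nhds 1) := by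
    have h := tendsto_const_nhds (x := (1 : ℝ)).sub (tendsto_inv_atTop_zero.comp hsq)
    rw [sub_zero] at h
    refine h.congr fun x => ?_
    simp only [Function.comp_apply]
    field_simp
    ring
  refine tendsto_of_tendsto_of_tendsto_of_le_of_le' hlow tendsto_const_nhds ?_ ?_
  · filter_upwards [eventually_lt_atBot 0] with x hx
    rw [le_div_iff₀ (stdNormalPDF_pos x)]
    calc x ^ 2 / (1 + x ^ 2) * stdNormalPDF x = -x * (-x * stdNormalPDF x / (1 + x ^ 2)) := by
          ring
      _ ≤ -x * stdNormalCDF x :=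
          mul_le_mul_of_nonneg_left (neg_mul_stdNormalPDF_div_le_stdNormalCDF x) (by linarith)
      _ = stdNormalCDF x * -x := mul_comm _ _
  · filter_upwards [eventually_lt_atBot 0] with x hx
    rw [div_le_one (stdNormalPDF_pos x), ← le_div_iff₀ (neg_pos.2 hx)]
    exact stdNormalCDF_le_stdNormalPDF_div_neg hx

lemma tendsto_log_stdNormalCDF_div_sq :
    Tendsto (fun x => Real.log (stdNormalCDF x) / x ^ 2) atBot (nhds (-(1 / 2))) := by
  have hsq : Tendsto (fun x : ℝ => x ^ 2) atBot atTop :=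
    (tendsto_pow_atTop two_ne_zero).comp tendsto_neg_atBot_atTop |>.congr fun x => by simp
  have hlog_sq : Tendsto (fun x : ℝ => Real.log x / x ^ 2) atBot (nhds 0) := by
    have h := ((Real.tendsto_pow_log_div_mul_add_atTop 1 0 1 one_ne_zero).comp hsq).const_mul
      (1 / 2)
    rw [mul_zero] at h
    refine h.congr fun x => ?_
    simp only [Function.comp_apply, Real.log_pow]
    ring
  have hlog_ratio := ((Real.continuousAt_log one_ne_zero).tendsto.comp
    tendsto_stdNormalCDF_mul_neg_div_stdNormalPDF)
  rw [Real.log_one] at hlog_ratio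
  have h := (((hlog_ratio.sub_const (Real.log (Real.sqrt (2 * Real.pi)))).div_atTop hsq).sub
    hlog_sq).sub_const (1 / 2)
  rw [sub_zero, zero_sub] at h
  refine h.congr' ?_
  filter_upwards [eventually_lt_atBot 0] with x hx
  have hφ : Real.log (stdNormalPDF x) = -Real.log (Real.sqrt (2 * Real.pi)) - x ^ 2 / 2 := by
    rw [stdNormalPDF, Real.log_mul (by positivity) (Real.exp_ne_zero _), Real.log_inv,
      Real.log_exp]
    ring
  simp only [Function.comp_apply]
  rw [Real.log_div (mul_pos (stdNormalCDF_pos x) (neg_pos.2 hx)).ne' (stdNormalPDF_pos x).ne',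
    Real.log_mul (stdNormalCDF_pos x).ne' (neg_ne_zero.2 hx.ne), Real.log_neg_eq_log, hφ]
  have := hx.ne
  field_simp
  ring


lemma tendsto_log_div_add_div_log {α : ℝ} (hα : 0 < α) :
    Tendsto (fun x => Real.log (α / (α + x)) / Real.log x) atTop (nhds (-1)) := by
  have h := (((tendsto_const_nhds (x := Real.log α)).div_atTop Real.tendsto_log_atTop).sub_const
    1).sub ((Real.tendsto_log_comp_add_sub_log α).div_atTop Real.tendsto_log_atTop)
  rw [zero_sub, sub_zero] at h
  refine h.congr' ?_
  filter_upwards [eventually_gt_atTop 1] with x hx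
  have hlog : Real.log x ≠ 0 := (Real.log_pos hx).ne'
  rw [Real.log_div hα.ne' (by linarith), add_comm α x]
  field_simp
  ring

section

variable {ι : Type*} {l : Filter ι}

lemma tendsto_atBot_of_tendsto_stdNormalCDF {u : ι → ℝ}
    (h : Tendsto (fun i => stdNormalCDF (u i)) l (nhds 0)) : Tendsto u l atBot :=
  tendsto_atBot.2 fun M => by
    filter_upwards [h.eventually_lt_const (stdNormalCDF_pos M)] with i hi
    exact (monotone_stdNormalCDF.reflect_lt hi).le

lemma tendsto_sq_div_of_tendsto_log_stdNormalCDF_div {u T : ι → ℝ} (hu : Tendsto u l atBot)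
    (h : Tendsto (fun i => Real.log (stdNormalCDF (u i)) / T i) l (nhds (-1))) :
    Tendsto (fun i => u i ^ 2 / (2 * T i)) l (nhds 1) := by
  have h' := (h.div (tendsto_log_stdNormalCDF_div_sq.comp hu) (by norm_num)).div_const 2
  rw [show (-1 : ℝ) / -(1 / 2) / 2 = 1 by norm_num] at h'
  refine h'.congr' ?_
  filter_upwards [hu.eventually_lt_atBot 0,
    (tendsto_stdNormalCDF_atBot.comp hu).eventually_lt_const one_pos,
    h.eventually_ne (by norm_num : (-1 : ℝ) ≠ 0)] with i hu0 hΦ hT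
  have hlog : Real.log (stdNormalCDF (u i)) ≠ 0 :=
    (Real.log_neg (stdNormalCDF_pos _) hΦ).ne
  have hu0' : u i ≠ 0 := hu0.ne
  have hT0 : T i ≠ 0 := fun hT0 => hT (by simp [hT0])
  simp only [Function.comp_apply, Pi.div_apply]
  field_simp

lemma tendsto_div_of_tendsto_sq_div_sqrt {μ S : ι → ℝ} (hS : Tendsto S l atTop)
    (hμ : ∀ᶠ i in l, μ i < 0)
    (h : Tendsto (fun i => (μ i / √(1 + S i)) ^ 2 / S i) l (nhds 1)) :
    Tendsto (fun i => μ i / S i) l (nhds (-1)) := by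
  have hsq : Tendsto (fun i => (μ i / S i) ^ 2) l (nhds 1) := by
    have h' := h.mul ((tendsto_inv_atTop_zero.comp hS).const_add 1)
    rw [add_zero, mul_one] at h'
    refine h'.congr' ?_
    filter_upwards [hS.eventually_gt_atTop 0] with i hSi
    simp only [Function.comp_apply]
    rw [div_pow, Real.sq_sqrt (by linarith)]
    field_simp
    ring
  have h' := hsq.sqrt.neg
  rw [Real.sqrt_one] at h'
  refine h'.congr' ?_
  filter_upwards [hμ, hS.eventually_gt_atTop 0] with i hμi hSi
  rw [Real.sqrt_sq_eq_abs, abs_of_neg (div_neg_of_neg_of_pos hμi hSi), neg_neg]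

lemma tendsto_add_div_sqrt_add_atBot {μ T : ι → ℝ} (hT : Tendsto T l atTop)
    (hμ : Tendsto (fun i => μ i / T i) l (nhds (-1))) (d s : ℝ) :
    Tendsto (fun i => (μ i + d) / √(T i + s)) l atBot := by
  have hinv := tendsto_inv_atTop_zero.comp hT
  -- `(μ + d) / √(T + s) = √(T + s) · (μ/T + d/T) / (1 + s/T)`
  have hratio := (hμ.add (hinv.const_mul d)).div ((hinv.const_mul s).const_add 1) (by norm_num)
  rw [mul_zero, mul_zero, add_zero, add_zero, div_one] at hratio
  have hTs := tendsto_atTop_add_const_right _ s hT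
  refine ((Real.tendsto_sqrt_atTop.comp hTs).atTop_mul_neg (by norm_num) hratio).congr' ?_
  filter_upwards [hT.eventually_gt_atTop 0, hTs.eventually_gt_atTop 0] with i hTi hTsi
  have hsqrt := Real.sq_sqrt hTsi.le
  have := (Real.sqrt_pos.2 hTsi).ne'
  simp only [Function.comp_apply, Pi.div_apply]
  field_simp
  rw [hsqrt]

lemma tendsto_sq_div_sqrt_sub_sq_div_sqrt {μ T : ι → ℝ} (hT : Tendsto T l atTop)
    (hμ : Tendsto (fun i => μ i / T i) l (nhds (-1))) (d s : ℝ) :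
    Tendsto (fun i => (μ i / √(1 + T i)) ^ 2 - ((μ i + d) / √(T i + s)) ^ 2) l
      (nhds (s - 1 + 2 * d)) := by
  have hinv := tendsto_inv_atTop_zero.comp hT
  have hTs := tendsto_atTop_add_const_right _ s hT
  -- with `m = μ/T` and `e = 1/T` the difference is
  -- `m² (s - 1) / ((1 + e) (1 + s e)) - (2 d m + d² e) / (1 + s e)`
  have h := (((hμ.pow 2).mul_const (s - 1)).div
      ((hinv.const_add 1).mul ((hinv.const_mul s).const_add 1)) (by norm_num)).sub
    (((hμ.const_mul (2 * d)).add (hinv.const_mul (d ^ 2))).div ((hinv.const_mul s).const_add 1)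
      (by norm_num))
  convert h.congr' ?_ using 2
  · norm_num
  filter_upwards [hT.eventually_gt_atTop 0, hTs.eventually_gt_atTop 0] with i hTi hTsi
  simp only [Function.comp_apply, Pi.div_apply]
  have := hTi.ne'
  simp only [div_pow, Real.sq_sqrt hTsi.le, Real.sq_sqrt (show 0 ≤ 1 + T i by linarith)]
  field_simp
  ring

lemma tendsto_stdNormalCDF_div_stdNormalCDF {x y : ι → ℝ} {κ : ℝ} (hx : Tendsto x l atBot)
    (hy : Tendsto y l atBot) (h : Tendsto (fun i => x i ^ 2 - y i ^ 2) l (nhds κ)) :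
    Tendsto (fun i => stdNormalCDF (y i) / stdNormalCDF (x i)) l (nhds (Real.exp (κ / 2))) := by
  have hxy : Tendsto (fun i => x i / y i) l (nhds 1) := by
    -- `x/y - 1 = (x² - y²) / ((x + y) y)`
    have h' := (h.div_atTop ((hx.atBot_add_atBot hy).atBot_mul_atBot₀ hy)).const_add 1
    rw [add_zero] at h'
    refine h'.congr' ?_
    filter_upwards [hx.eventually_lt_atBot 0, hy.eventually_lt_atBot 0] with i hx0 hy0
    have : x i + y i ≠ 0 := by linarith
    have := hy0.ne
    field_simp
    ring
  -- `Φ(y)/Φ(x) = (R y / R x) · (x/y) · φ(y)/φ(x)`, `R z = Φ(z) (-z) / φ(z)` the Mills ratio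
  have hmills := tendsto_stdNormalCDF_mul_neg_div_stdNormalPDF
  have h' := ((((hmills.comp hy).div (hmills.comp hx) one_ne_zero).mul hxy).mul
    (Real.continuous_exp.tendsto _ |>.comp (h.div_const 2)))
  rw [div_one, one_mul, one_mul] at h'
  refine h'.congr' ?_
  filter_upwards [hx.eventually_lt_atBot 0, hy.eventually_lt_atBot 0] with i hx0 hy0
  have hφ : stdNormalPDF (y i) / stdNormalPDF (x i) = Real.exp ((x i ^ 2 - y i ^ 2) / 2) := by
    rw [stdNormalPDF, stdNormalPDF, mul_div_mul_left _ _ (by positivity), ← Real.exp_sub]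
    ring_nf
  have hφx := stdNormalPDF_pos (x i)
  have hφy := stdNormalPDF_pos (y i)
  have hx0' := hx0.ne
  have hy0' := hy0.ne
  simp only [Function.comp_apply, Pi.div_apply]
  rw [← hφ]
  field_simp

end

theorem mvpIBP_cov_common_features_general (α : ℝ) (hα : 0 < α) (μ : ℕ → ℝ)
    (hμ : ∀ p : ℕ, 2 ≤ p →
      stdNormalCDF (μ p / Real.sqrt (1 + tauP p ^ 2)) = α / (α + p))
    (c s : ℝ)
    (εstar : ℝ) :
    Filter.Tendsto
      (fun p : ℕ =>
        (p : ℝ) * stdNormalCDF ((μ p + c - εstar) / Real.sqrt (2 * Real.log p + s)))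
      Filter.atTop (nhds (α * Real.exp (-εstar + c + (s - 1) / 2))) := by
  set T : ℕ → ℝ := fun p => 2 * Real.log p
  set u : ℕ → ℝ := fun p => μ p / √(1 + T p)
  have hT : Tendsto T atTop atTop :=
    (Real.tendsto_log_atTop.comp tendsto_natCast_atTop_atTop).const_mul_atTop two_pos
  have hΦu : ∀ᶠ p in atTop, stdNormalCDF (u p) = α / (α + p) := by
    filter_upwards [eventually_ge_atTop 2] with p hp
    have : 0 ≤ 2 * Real.log p := by
      have := Real.log_nonneg (show (1 : ℝ) ≤ p by exact_mod_cast (one_le_two.trans hp))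
      linarith
    rw [← hμ p hp, tauP, Real.sq_sqrt this]
  have hu : Tendsto u atTop atBot := tendsto_atBot_of_tendsto_stdNormalCDF <|
    (tendsto_const_nhds.div_atTop (tendsto_atTop_add_const_left _ α tendsto_natCast_atTop_atTop)
      ).congr' (hΦu.mono fun _ h => h.symm)
  have hu_sq : Tendsto (fun p => u p ^ 2 / T p) atTop (nhds 1) := by
    refine tendsto_sq_div_of_tendsto_log_stdNormalCDF_div hu
      (((tendsto_log_div_add_div_log hα).comp tendsto_natCast_atTop_atTop).congr' ?_)
    filter_upwards [hΦu] with p hp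
    rw [Function.comp_apply, hp]
  have hm : Tendsto (fun p => μ p / T p) atTop (nhds (-1)) :=
    tendsto_div_of_tendsto_sq_div_sqrt hT
      ((hu.eventually_lt_atBot 0).mono fun p hp => neg_of_div_neg_left hp (Real.sqrt_nonneg _))
      hu_sq
  have hratio := tendsto_stdNormalCDF_div_stdNormalCDF hu
    (tendsto_add_div_sqrt_add_atBot hT hm (c - εstar) s)
    (tendsto_sq_div_sqrt_sub_sq_div_sqrt hT hm (c - εstar) s)
  have hlim := (hratio.const_mul α).mul (tendsto_natCast_div_add_atTop α)
  rw [mul_one, show (s - 1 + 2 * (c - εstar)) / 2 = -εstar + c + (s - 1) / 2 by ring] at hlim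
  refine hlim.congr' ?_
  filter_upwards [hΦu] with p hp
  rw [hp, add_sub_assoc]
  field_simp
  ring

/-- Proposition 7: with `Φ(ε*) = ε ∈ (0,1)`, covariate effect mean `c = x_i^T γ` and
variance `s = x_i^T Ψ x_i ≥ 0`, the expected number of common features at sample `i` in
the covariate-dependent MVP-IBP model satisfies
`lim_{p→∞} p Φ((μ_p + c - ε*)/√(2 log p + s)) = α exp(-ε* + c + (s-1)/2)`. -/
theorem mvpIBP_cov_common_features (α : ℝ) (hα : 0 < α) (μ : ℕ → ℝ)
    (hμ : ∀ p : ℕ, 2 ≤ p →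
      stdNormalCDF (μ p / Real.sqrt (1 + tauP p ^ 2)) = α / (α + p))
    (c s : ℝ) (hs : 0 ≤ s)
    (ε εstar : ℝ) (hε : ε ∈ Set.Ioo (0 : ℝ) 1) (hεstar : stdNormalCDF εstar = ε) :
    Filter.Tendsto
      (fun p : ℕ =>
        (p : ℝ) * stdNormalCDF ((μ p + c - εstar) / Real.sqrt (2 * Real.log p + s)))
      Filter.atTop (nhds (α * Real.exp (-εstar + c + (s - 1) / 2))) :=
  mvpIBP_cov_common_features_general α hα μ hμ c s εstar
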